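/- arXiv:math/0501345 — 3 statements merged into one kernel-verified Lean document; each statement's English description precedes it below -/
import Mathlib

section
/- Let ω = (ω₁, …, ωₙ) be a ℚ-vector space basis of ℚⁿ and let F ⊂ ℚⁿ be a finite set of vectors with 0 ≺_ω v for every v ∈ F. Then there exists a vector w ∈ ℚⁿ such that ⟨w, v⟩ > 0 for every v ∈ F. -/
/-- Dot product of two vectors in `ℚⁿ`. -/
def dotp {n : ℕ} (u v : Fin n → ℚ) : ℚ := ∑ i, u i * v i

/-- The rational group order `≺_ω` associated to a family `ω`:
`u ≺_ω v` iff `(⟨ω₁,u⟩, …, ⟨ωₙ,u⟩)` is lexicographically smaller than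
`(⟨ω₁,v⟩, …, ⟨ωₙ,v⟩)`. -/
def precW {n : ℕ} (ω : Fin n → Fin n → ℚ) (u v : Fin n → ℚ) : Prop :=
  ∃ i : Fin n, (∀ j : Fin n, j < i → dotp (ω j) u = dotp (ω j) v) ∧
    dotp (ω i) u < dotp (ω i) v

/-- The perturbed vector `ω_ε = ω₁ + ε·ω₂ + ⋯ + ε^(n-1)·ωₙ`. -/
def pert {n : ℕ} (ω : Fin n → Fin n → ℚ) (ε : ℚ) : Fin n → ℚ :=
  fun j => ∑ i : Fin n, ε ^ (i : ℕ) * ω i j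

lemma key {n : ℕ} (a : Fin n → ℚ) (k : Fin n) (h0 : ∀ j, j < k → a j = 0)
    (hk : 0 < a k) :
    ∃ δ : ℚ, 0 < δ ∧ ∀ ε : ℚ, 0 < ε → ε ≤ δ → 0 < ∑ i : Fin n, ε ^ (i : ℕ) * a i := by
  set S : ℚ := ∑ i, |a i| with hSdef
  have hS0 : 0 ≤ S := Finset.sum_nonneg fun i _ => abs_nonneg _
  refine ⟨min 1 (a k / (2 * (S + 1))), ?_, ?_⟩
  · have : 0 < a k / (2 * (S + 1)) := by positivity
    simp [this]
  intro ε hε hεδ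
  have hε1 : ε ≤ 1 := le_trans hεδ (min_le_left _ _)
  have hε2 : ε ≤ a k / (2 * (S + 1)) := le_trans hεδ (min_le_right _ _)
  set s : Finset (Fin n) := Finset.univ.filter (fun i => k < i) with hsdef
  have hsplit : ∑ i : Fin n, ε ^ (i : ℕ) * a i
      = ε ^ (k : ℕ) * a k + ∑ i ∈ s, ε ^ (i : ℕ) * a i := by
    have h1 : ∑ i ∈ Finset.univ.filter (fun i => k ≤ i), ε ^ (i : ℕ) * a i
        = ∑ i : Fin n, ε ^ (i : ℕ) * a i := by
      apply Finset.sum_filter_of_ne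
      intro x _ hx
      by_contra h
      exact hx (by rw [h0 x (lt_of_not_ge h)]; ring)
    have h2 : Finset.univ.filter (fun i => k ≤ i) = insert k s := by
      ext x
      simp [hsdef, le_iff_eq_or_lt, eq_comm, or_comm]
    have hks : k ∉ s := by simp [hsdef]
    rw [← h1, h2, Finset.sum_insert hks]
  rw [hsplit]
  have hbound : ∀ i ∈ s, -(ε ^ ((k : ℕ) + 1) * |a i|) ≤ ε ^ (i : ℕ) * a i := by
    intro i hi
    have hki : (k : ℕ) + 1 ≤ (i : ℕ) := by
      have : k < i := by simpa [hsdef] using hi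
      exact this
    have hpow : ε ^ (i : ℕ) ≤ ε ^ ((k : ℕ) + 1) :=
      pow_le_pow_of_le_one (le_of_lt hε) hε1 hki
    have hpp : (0:ℚ) ≤ ε ^ (i : ℕ) := le_of_lt (pow_pos hε _)
    calc -(ε ^ ((k : ℕ) + 1) * |a i|) ≤ -(ε ^ (i : ℕ) * |a i|) := by
          have := mul_le_mul_of_nonneg_right hpow (abs_nonneg (a i))
          linarith
      _ ≤ ε ^ (i : ℕ) * a i := by
          have := mul_le_mul_of_nonneg_left (neg_abs_le (a i)) hpp
          linarith
  have hsum : -(ε ^ ((k : ℕ) + 1) * S) ≤ ∑ i ∈ s, ε ^ (i : ℕ) * a i := by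
    have h1 : ∑ i ∈ s, -(ε ^ ((k : ℕ) + 1) * |a i|) ≤ ∑ i ∈ s, ε ^ (i : ℕ) * a i :=
      Finset.sum_le_sum hbound
    have h2 : ∑ i ∈ s, |a i| ≤ S :=
      Finset.sum_le_sum_of_subset_of_nonneg (Finset.subset_univ s)
        (fun i _ _ => abs_nonneg _)
    have h3 : ∑ i ∈ s, -(ε ^ ((k : ℕ) + 1) * |a i|)
        = -(ε ^ ((k : ℕ) + 1) * ∑ i ∈ s, |a i|) := by
      rw [Finset.mul_sum]
      simp
    rw [h3] at h1
    have hpp : (0:ℚ) ≤ ε ^ ((k : ℕ) + 1) := le_of_lt (pow_pos hε _)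
    nlinarith
  have hak : ε * S < a k := by
    have h2S : (0:ℚ) < 2 * (S + 1) := by linarith
    have hε2' : ε * (2 * (S + 1)) ≤ a k := by
      have := mul_le_mul_of_nonneg_right hε2 (le_of_lt h2S)
      rwa [div_mul_cancel₀ _ (ne_of_gt h2S)] at this
    nlinarith
  have hpk : (0:ℚ) < ε ^ (k : ℕ) := pow_pos hε _
  have : ε ^ ((k : ℕ) + 1) * S = ε ^ (k : ℕ) * (ε * S) := by ring
  nlinarith [mul_lt_mul_of_pos_left hak hpk]

theorem stmt1 {n : ℕ} (ω : Fin n → Fin n → ℚ)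
    (hind : LinearIndependent ℚ ω)
    (hspan : Submodule.span ℚ (Set.range ω) = ⊤)
    (F : Finset (Fin n → ℚ))
    (hF : ∀ v ∈ F, precW ω 0 v) :
    ∃ w : Fin n → ℚ, ∀ v ∈ F, 0 < dotp w v := by
  classical
  have hA : ∀ v ∈ F, ∃ δ : ℚ, 0 < δ ∧
      ∀ ε : ℚ, 0 < ε → ε ≤ δ → 0 < ∑ i : Fin n, ε ^ (i : ℕ) * dotp (ω i) v := by
    intro v hv
    obtain ⟨k, hk0, hkpos⟩ := hF v hv
    apply key (fun i => dotp (ω i) v) k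
    · intro j hj
      have := hk0 j hj
      have hz : dotp (ω j) 0 = 0 := by simp [dotp]
      rw [hz] at this
      exact this.symm
    · have hz : dotp (ω k) 0 = 0 := by simp [dotp]
      rw [hz] at hkpos
      exact hkpos
  choose! δ hδpos hδ using hA
  rcases F.eq_empty_or_nonempty with rfl | hne
  · exact ⟨0, by simp⟩
  set ε := F.inf' hne δ with hεdef
  have hεpos : 0 < ε := (Finset.lt_inf'_iff hne).mpr fun v hv => hδpos v hv
  refine ⟨pert ω ε, ?_⟩
  intro v hv
  have h1 : dotp (pert ω ε) v = ∑ i : Fin n, ε ^ (i : ℕ) * dotp (ω i) v := by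
    simp only [dotp, pert, Finset.sum_mul]
    rw [Finset.sum_comm]
    simp [Finset.mul_sum, mul_assoc]
  rw [h1]
  exact hδ v hv ε hεpos (Finset.inf'_le _ hv)
end

section
/- Let ω = (ω₁, …, ωₙ) be a ℚ-vector space basis of ℚⁿ such that 0 ≺_ω eᵢ for every standard basis vector eᵢ (i.e. ≺_ω is a term order), and let F ⊂ ℚⁿ be a finite set of vectors with 0 ≺_ω v for every v ∈ F. Then there exists a vector w ∈ ℚⁿ all of whose coordinates are positive such that ⟨w, v⟩ > 0 for every v ∈ F. -/
/-!
Perturb the lexicographic order into a single weight: for small `ε > 0` the vector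
`ω_ε = ω₁ + ε ω₂ + ⋯ + ε^(n-1) ωₙ` satisfies `⟨ω_ε, v⟩ = ∑ εⁱ ⟨ωᵢ, v⟩`, a polynomial in `ε` whose
lowest nonzero coefficient is positive whenever `0 ≺_ω v`, hence it is positive for all small
`ε > 0`. Applying this simultaneously to the finitely many vectors of `F` and to the `eᵢ`
(which gives `ω_ε i > 0`) yields the weight vector.
-/

open Filter Topology

section Perturbation

variable {𝕜 : Type*} [Field 𝕜] [LinearOrder 𝕜] [IsStrictOrderedRing 𝕜] [TopologicalSpace 𝕜]
  [OrderTopology 𝕜]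

theorem eventually_pos_sum_pow_mul {n : ℕ} {c : Fin n → 𝕜} {k : Fin n}
    (hlow : ∀ j < k, c j = 0) (hk : 0 < c k) :
    ∀ᶠ ε in 𝓝[>] (0 : 𝕜), 0 < ∑ i : Fin n, ε ^ (i : ℕ) * c i := by
  -- `i - k` truncates for `i < k`, harmless since those coefficients vanish; `q 0 = c k`.
  set q : 𝕜 → 𝕜 := fun ε => ∑ i : Fin n, ε ^ ((i : ℕ) - k) * c i
  have hfactor : ∀ ε, ∑ i : Fin n, ε ^ (i : ℕ) * c i = ε ^ (k : ℕ) * q ε := by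
    intro ε
    rw [Finset.mul_sum]
    refine Finset.sum_congr rfl fun i _ => ?_
    rcases lt_or_ge i k with hik | hki
    · simp [hlow i hik]
    · rw [← mul_assoc, ← pow_add, Nat.add_sub_cancel' (Fin.le_def.mp hki)]
  have hq0 : q 0 = c k := by
    refine (Finset.sum_eq_single k (fun i _ hik => ?_) (by simp)).trans (by simp)
    rcases lt_or_gt_of_ne hik with hlt | hgt
    · simp [hlow i hlt]
    · simp [zero_pow (Nat.sub_ne_zero_of_lt (Fin.lt_def.mp hgt))]
  have hq : ∀ᶠ ε in 𝓝 (0 : 𝕜), 0 < q ε := by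
    have hcont : Continuous q := by fun_prop
    exact hcont.continuousAt.eventually (lt_mem_nhds (hq0 ▸ hk))
  filter_upwards [nhdsWithin_le_nhds hq, self_mem_nhdsWithin] with ε hqε (hε : 0 < ε)
  rw [hfactor]
  exact mul_pos (pow_pos hε _) hqε

end Perturbation

theorem dotp_pert {n : ℕ} (ω : Fin n → Fin n → ℚ) (ε : ℚ) (v : Fin n → ℚ) :
    dotp (pert ω ε) v = ∑ i : Fin n, ε ^ (i : ℕ) * dotp (ω i) v := by
  simp only [dotp, pert, Finset.sum_mul, Finset.mul_sum, mul_assoc]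
  exact Finset.sum_comm

theorem dotp_single {n : ℕ} (w : Fin n → ℚ) (i : Fin n) : dotp w (Pi.single i 1) = w i := by
  simp [dotp, Pi.single_apply]

theorem eventually_pos_dotp_pert {n : ℕ} {ω : Fin n → Fin n → ℚ} {v : Fin n → ℚ}
    (hv : precW ω 0 v) : ∀ᶠ ε in 𝓝[>] (0 : ℚ), 0 < dotp (pert ω ε) v := by
  obtain ⟨k, hlow, hk⟩ := hv
  have hzero : ∀ j, dotp (ω j) 0 = 0 := fun j => by simp [dotp]
  simp only [hzero] at hlow hk
  simpa only [dotp_pert] using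
    eventually_pos_sum_pow_mul (c := fun i => dotp (ω i) v) (fun j hj => (hlow j hj).symm) hk

theorem stmt2_general {n : ℕ} (ω : Fin n → Fin n → ℚ)
    (hterm : ∀ i : Fin n, precW ω 0 (Pi.single i 1))
    (F : Finset (Fin n → ℚ))
    (hF : ∀ v ∈ F, precW ω 0 v) :
    ∃ w : Fin n → ℚ, (∀ i, 0 < w i) ∧ ∀ v ∈ F, 0 < dotp w v := by
  have hsmall : ∀ᶠ ε in 𝓝[>] (0 : ℚ),
      (∀ i, 0 < dotp (pert ω ε) (Pi.single i 1)) ∧ ∀ v ∈ F, 0 < dotp (pert ω ε) v :=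
    (eventually_all.2 fun i => eventually_pos_dotp_pert (hterm i)).and
      ((eventually_all_finset F).2 fun v hv => eventually_pos_dotp_pert (hF v hv))
  obtain ⟨ε, hpos, hFpos⟩ := hsmall.exists
  exact ⟨pert ω ε, fun i => dotp_single (pert ω ε) i ▸ hpos i, hFpos⟩

theorem stmt2 {n : ℕ} (ω : Fin n → Fin n → ℚ)
    (hind : LinearIndependent ℚ ω)
    (hspan : Submodule.span ℚ (Set.range ω) = ⊤)
    (hterm : ∀ i : Fin n, precW ω 0 (Pi.single i 1))
    (F : Finset (Fin n → ℚ))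
    (hF : ∀ v ∈ F, precW ω 0 v) :
    ∃ w : Fin n → ℚ, (∀ i, 0 < w i) ∧ ∀ v ∈ F, 0 < dotp w v :=
  stmt2_general ω hterm F hF
end

section
/- Let ω = (ω₁, …, ωₙ) and τ = (τ₁, …, τₙ) be ℚ-vector space bases of ℚⁿ, defining the rational group orders ≺₁ = ≺_ω and ≺₂ = ≺_τ. Let D ⊂ ℚⁿ be a finite set, let δ > 0 be rational such that for all u', v' ∈ M_τ := {⟨τᵢ,u⟩·v : i = 1, …, n; u, v ∈ D} one has u' ≺₁ v' ⟺ ⟨ω_δ, u'⟩ < ⟨ω_δ, v'⟩, and let ε > 0 be rational such that for all u', v' ∈ N_δ := {⟨ω_δ,u⟩·v : u, v ∈ D} one has u' ≺₂ v' ⟺ ⟨τ_ε, u'⟩ < ⟨τ_ε, v'⟩. Suppose u, v ∈ D satisfy ⟨ω_δ,u⟩ > 0, ⟨ω_δ,v⟩ > 0, ⟨τ_ε,u⟩ < 0 and ⟨τ_ε,v⟩ < 0, and define t_u = ⟨ω_δ,u⟩/(⟨ω_δ,u⟩ − ⟨τ_ε,u⟩) and t_v = ⟨ω_δ,v⟩/(⟨ω_δ,v⟩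 − ⟨τ_ε,v⟩). If t_u = t_v, then there exists a rational λ > 0 with u = λ·v. -/
lemma dotp_smul_right {n : ℕ} (x y : Fin n → ℚ) (c : ℚ) :
    dotp x (c • y) = c * dotp x y := by
  simp [dotp, Finset.mul_sum]; ring_nf
  exact Finset.sum_congr rfl (fun i _ => by ring)

lemma dotp_add_left {n : ℕ} (x y z : Fin n → ℚ) :
    dotp (x + y) z = dotp x z + dotp y z := by
  simp [dotp, ← Finset.sum_add_distrib]; exact Finset.sum_congr rfl (fun i _ => by ring)

lemma dotp_smul_left {n : ℕ} (x y : Fin n → ℚ) (c : ℚ) :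
    dotp (c • x) y = c * dotp x y := by
  simp [dotp, Finset.mul_sum]; exact Finset.sum_congr rfl (fun i _ => by ring)

lemma eq_of_dot_basis {n : ℕ} (τ : Fin n → Fin n → ℚ)
    (hspan : Submodule.span ℚ (Set.range τ) = ⊤) (w : Fin n → ℚ)
    (h : ∀ i, dotp (τ i) w = 0) : w = 0 := by
  have hall : ∀ x : Fin n → ℚ, dotp x w = 0 := by
    intro x
    have hx : x ∈ Submodule.span ℚ (Set.range τ) := by rw [hspan]; trivial
    induction hx using Submodule.span_induction with
    | mem x hx => obtain ⟨i, rfl⟩ := hx; exact h i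
    | zero => simp [dotp]
    | add a b _ _ ha hb => rw [dotp_add_left, ha, hb, add_zero]
    | smul c a _ ha => rw [dotp_smul_left, ha, mul_zero]
  have hw : dotp w w = 0 := hall w
  rw [dotp, Finset.sum_eq_zero_iff_of_nonneg (fun i _ => mul_self_nonneg (w i))] at hw
  funext i
  exact mul_self_eq_zero.mp (hw i (Finset.mem_univ i))

lemma dotp_sub_right {n : ℕ} (x y z : Fin n → ℚ) :
    dotp x (y - z) = dotp x y - dotp x z := by
  simp [dotp, mul_sub, Finset.sum_sub_distrib]

theorem stmt9 {n : ℕ} (ω τ : Fin n → Fin n → ℚ)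
    (hωind : LinearIndependent ℚ ω)
    (hωspan : Submodule.span ℚ (Set.range ω) = ⊤)
    (hτind : LinearIndependent ℚ τ)
    (hτspan : Submodule.span ℚ (Set.range τ) = ⊤)
    (D : Finset (Fin n → ℚ)) (δ ε : ℚ) (hδ : 0 < δ) (hε : 0 < ε)
    (hδM : ∀ u' ∈ {w : Fin n → ℚ | ∃ i : Fin n, ∃ u ∈ D, ∃ v ∈ D, w = dotp (τ i) u • v},
           ∀ v' ∈ {w : Fin n → ℚ | ∃ i : Fin n, ∃ u ∈ D, ∃ v ∈ D, w = dotp (τ i) u • v},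
           (precW ω u' v' ↔ dotp (pert ω δ) u' < dotp (pert ω δ) v'))
    (hεN : ∀ u' ∈ {w : Fin n → ℚ | ∃ u ∈ D, ∃ v ∈ D, w = dotp (pert ω δ) u • v},
           ∀ v' ∈ {w : Fin n → ℚ | ∃ u ∈ D, ∃ v ∈ D, w = dotp (pert ω δ) u • v},
           (precW τ u' v' ↔ dotp (pert τ ε) u' < dotp (pert τ ε) v'))
    (u v : Fin n → ℚ) (hu : u ∈ D) (hv : v ∈ D)
    (hωu : 0 < dotp (pert ω δ) u) (hωv : 0 < dotp (pert ω δ) v)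
    (hτu : dotp (pert τ ε) u < 0) (hτv : dotp (pert τ ε) v < 0)
    (tu tv : ℚ)
    (htu : tu = dotp (pert ω δ) u / (dotp (pert ω δ) u - dotp (pert τ ε) u))
    (htv : tv = dotp (pert ω δ) v / (dotp (pert ω δ) v - dotp (pert τ ε) v))
    (heq : tu = tv) :
    ∃ lam : ℚ, 0 < lam ∧ u = lam • v := by
  set A := dotp (pert ω δ) u with hA
  set B := dotp (pert ω δ) v with hB
  set C := dotp (pert τ ε) u with hC
  set E := dotp (pert τ ε) v with hE
  have hdu : (0:ℚ) < A - C := by linarith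
  have hdv : (0:ℚ) < B - E := by linarith
  -- cross multiplication
  have hcross : A * E = B * C := by
    rw [htu, htv, div_eq_div_iff (ne_of_gt hdu) (ne_of_gt hdv)] at heq
    nlinarith [heq]
  -- the two vectors
  set w₁ : Fin n → ℚ := A • v with hw₁
  set w₂ : Fin n → ℚ := B • u with hw₂
  have hm₁ : w₁ ∈ {w : Fin n → ℚ | ∃ u ∈ D, ∃ v ∈ D, w = dotp (pert ω δ) u • v} :=
    ⟨u, hu, v, hv, rfl⟩
  have hm₂ : w₂ ∈ {w : Fin n → ℚ | ∃ u ∈ D, ∃ v ∈ D, w = dotp (pert ω δ) u • v} :=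
    ⟨v, hv, u, hu, rfl⟩
  have hdot : dotp (pert τ ε) w₁ = dotp (pert τ ε) w₂ := by
    rw [hw₁, hw₂, dotp_smul_right, dotp_smul_right, ← hC, ← hE]
    linarith [hcross]
  have h12 := hεN w₁ hm₁ w₂ hm₂
  have h21 := hεN w₂ hm₂ w₁ hm₁
  have hweq : w₁ = w₂ := by
    have hkey : ∀ i, dotp (τ i) w₁ = dotp (τ i) w₂ := by
      by_contra hcon
      push_neg at hcon
      set S : Finset (Fin n) := Finset.univ.filter (fun i => dotp (τ i) w₁ ≠ dotp (τ i) w₂)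
        with hS
      have hSne : S.Nonempty := by
        obtain ⟨i, hi⟩ := hcon
        exact ⟨i, by simp [hS, hi]⟩
      set i := S.min' hSne with hi
      have hieq : ∀ j, j < i → dotp (τ j) w₁ = dotp (τ j) w₂ := by
        intro j hj
        by_contra hne
        exact absurd (S.min'_le j (by simp [hS, hne])) (not_le.mpr hj)
      have hine : dotp (τ i) w₁ ≠ dotp (τ i) w₂ := by
        have := S.min'_mem hSne
        simpa [hS] using this
      rcases lt_or_gt_of_ne hine with hlt | hgt
      · have : precW τ w₁ w₂ := ⟨i, hieq, hlt⟩
        rw [h12] at this; linarith [hdot]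
      · have : precW τ w₂ w₁ := ⟨i, fun j hj => (hieq j hj).symm, hgt⟩
        rw [h21] at this; linarith [hdot]
    have : w₁ - w₂ = 0 := by
      apply eq_of_dot_basis τ hτspan
      intro i
      rw [dotp_sub_right, hkey i, sub_self]
    exact sub_eq_zero.mp this
  refine ⟨A / B, div_pos hωu hωv, ?_⟩
  have := congrArg (fun x => B⁻¹ • x) hweq.symm
  simpa [hw₁, hw₂, smul_smul, inv_mul_cancel₀ (ne_of_gt hωv), div_eq_inv_mul,
    mul_comm] using this
end
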